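/- Assume hypotheses (H): U is a 3×3 real positive-definite symmetric matrix, ê ∈ ℝ³ is a unit vector, Û = (−I + 2 ê⊗ê) U (−I + 2 ê⊗ê), and there exist R̂ ∈ SO(3) and nonzero vectors a, n ∈ ℝ³ with R̂ Û = U + a ⊗ n. Assume further that the cofactor conditions (CC1), (CC2), (CC3) hold for (U, a, n). Then for every f ∈ [0,1] with f ≠ 1/2 there exist two distinct solutions of the equation of the crystallographic theory: there exist R₁, R₂ ∈ SO(3) and vectors b₁, m₁, b₂, m₂ ∈ ℝ³ such that Rᵢ (f(U + a⊗n) + (1−f)U) = I + bᵢ⊗mᵢ for i = 1, 2, and (R₁, b₁⊗m₁) ≠ (R₂, b₂⊗m₂). -/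

import Mathlib

open Matrix Polynomial

/-- The 180° rotation matrix `-I + 2 ê⊗ê` for a unit vector `ê`. -/
noncomputable def reflMat (e : Fin 3 → ℝ) : Matrix (Fin 3) (Fin 3) ℝ :=
  -1 + (2 : ℝ) • Matrix.vecMulVec e e

/-- Membership in SO(3): orthogonal with determinant 1. -/
def SO3 (R : Matrix (Fin 3) (Fin 3) ℝ) : Prop := R * Rᵀ = 1 ∧ R.det = 1

/-- The cofactor matrix: `(cof M)ᵢⱼ = (−1)^{i+j} det(M with row i and column j deleted)`. -/
noncomputable def cof (M : Matrix (Fin 3) (Fin 3) ℝ) : Matrix (Fin 3) (Fin 3) ℝ :=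
  Matrix.of fun i j => (-1 : ℝ) ^ ((i : ℕ) + (j : ℕ)) *
    (M.submatrix i.succAbove j.succAbove).det

/-- `μ` is the middle eigenvalue of `U`: its eigenvalues, with multiplicity,
are `l1 ≤ μ ≤ l3`. -/
def IsMiddleEigenvalue (U : Matrix (Fin 3) (Fin 3) ℝ) (μ : ℝ) : Prop :=
  ∃ l1 l3 : ℝ, l1 ≤ μ ∧ μ ≤ l3 ∧
    U.charpoly = (X - C l1) * (X - C μ) * (X - C l3)

/-- (CC1): the middle eigenvalue of `U` is 1. -/
def CC1 (U : Matrix (Fin 3) (Fin 3) ℝ) : Prop := IsMiddleEigenvalue U 1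

/-- (CC2): `a · U cof(U² − I) n = 0`. -/
noncomputable def CC2 (U : Matrix (Fin 3) (Fin 3) ℝ) (a n : Fin 3 → ℝ) : Prop :=
  a ⬝ᵥ (U * cof (U * U - 1)).mulVec n = 0

/-- (CC3): `tr U² − det U² − |a|²|n|²/4 − 2 ≥ 0`. -/
def CC3 (U : Matrix (Fin 3) (Fin 3) ℝ) (a n : Fin 3 → ℝ) : Prop :=
  (U * U).trace - (U * U).det - (a ⬝ᵥ a) * (n ⬝ᵥ n) / 4 - 2 ≥ 0

/-!
Put `M_f = f (U + a ⊗ n) + (1 - f) U = U + f a ⊗ n` and `C_f = M_fᵀ M_f`. Then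
`C_f - I = (U² - I) + f (Ua ⊗ n + n ⊗ Ua) + f² |a|² n ⊗ n`, and `det (C_f - I)` is a polynomial
of degree at most two in `f`: its constant term vanishes by (CC1), its linear term is
`2 a · U cof(U² - I) n = 0` by (CC2), and it vanishes at `f = 1` because
`C_1 = Q U² Q` with `Q = -I + 2 ê ⊗ ê`. Hence `1` is an eigenvalue of `C_f` for every `f`.
Since `det M_f = det U` and `tr C_f = tr U² + (f² - f) |a|² |n|²`, (CC3) gives for the other two
eigenvalues `(1 - λ₁) (λ₃ - 1) = tr C_f - det C_f - 2 ≥ (f - 1/2)² |a|² |n|² > 0`, so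
`λ₁ < 1 < λ₃`. The Ball–James construction then gives two matrices `G = I + b ⊗ m` with
`Gᵀ G = C_f` and `det G = det M_f`, and `R = G M_f⁻¹` is a rotation.
-/

namespace Matrix

variable {n : Type*} [Fintype n] {R : Type*} [CommRing R]

theorem dotProduct_vecMulVec_mulVec (x b m y : n → R) :
    x ⬝ᵥ vecMulVec b m *ᵥ y = (x ⬝ᵥ b) * (m ⬝ᵥ y) := by
  rw [vecMulVec_mulVec]
  simp [dotProduct_smul, mul_comm]

theorem transpose_mul_self_add_smul_vecMulVec (U : Matrix n n R) (a v : n → R) (x : R) :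
    (U + x • vecMulVec a v)ᵀ * (U + x • vecMulVec a v)
      = Uᵀ * U + x • (vecMulVec (Uᵀ *ᵥ a) v + vecMulVec v (Uᵀ *ᵥ a))
        + (x ^ 2 * (a ⬝ᵥ a)) • vecMulVec v v := by
  rw [transpose_add, transpose_smul, transpose_vecMulVec, add_mul, mul_add, mul_add,
    Matrix.smul_mul, Matrix.mul_smul, Matrix.smul_mul, Matrix.mul_smul, vecMulVec_mul_vecMulVec,
    mul_vecMulVec, vecMulVec_mul, ← mulVec_transpose, vecMulVec_smul]
  module

theorem trace_transpose_mul_self_add_smul_vecMulVec (U : Matrix n n R) (a v : n → R) (x : R) :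
    ((U + x • vecMulVec a v)ᵀ * (U + x • vecMulVec a v)).trace
      = (1 - x) * (Uᵀ * U).trace + x * ((U + vecMulVec a v)ᵀ * (U + vecMulVec a v)).trace
        + (x ^ 2 - x) * ((a ⬝ᵥ a) * (v ⬝ᵥ v)) := by
  have h := transpose_mul_self_add_smul_vecMulVec U a v
  rw [h, ← one_smul R (vecMulVec a v), h]
  simp only [trace_add, trace_smul, trace_vecMulVec, smul_eq_mul]
  ring

variable [DecidableEq n]

theorem det_one_add_vecMulVec (b m : n → R) : (1 + vecMulVec b m).det = 1 + m ⬝ᵥ b := by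
  rw [vecMulVec_eq Unit, det_one_add_replicateCol_mul_replicateRow]

theorem transpose_mul_self_one_add_vecMulVec (b m : n → R) :
    (1 + vecMulVec b m)ᵀ * (1 + vecMulVec b m)
      = 1 + (vecMulVec b m + vecMulVec m b + (b ⬝ᵥ b) • vecMulVec m m) := by
  rw [transpose_add, transpose_one, transpose_vecMulVec, add_mul, mul_add, mul_add,
    vecMulVec_mul_vecMulVec, vecMulVec_smul, one_mul, one_mul, mul_one]
  abel

variable {Q : Matrix n n R}

theorem det_conj_eq_of_mul_self_eq_one (hQ : Q * Q = 1) (A : Matrix n n R) :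
    (Q * A * Q).det = A.det := by
  rw [det_mul, det_mul, mul_right_comm, ← det_mul, hQ, det_one, one_mul]

theorem trace_conj_eq_of_mul_self_eq_one (hQ : Q * Q = 1) (A : Matrix n n R) :
    (Q * A * Q).trace = A.trace := by
  rw [trace_mul_cycle, hQ, Matrix.one_mul]

theorem transpose_mul_self_mul_conj {O U : Matrix n n R} (hO : O * Oᵀ = 1) (hQ : Qᵀ = Q)
    (hQQ : Q * Q = 1) (hU : Uᵀ = U) :
    (O * (Q * U * Q))ᵀ * (O * (Q * U * Q)) = Q * (U * U) * Q := by
  rw [transpose_mul, transpose_mul, transpose_mul, hQ, hU]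
  calc _ = Q * U * Q * (Oᵀ * O) * (Q * U * Q) := by
        simp only [Matrix.mul_assoc]
    _ = Q * U * (Q * Q) * U * Q := by
        rw [mul_eq_one_comm.mp hO]; simp only [Matrix.mul_one, Matrix.mul_assoc]
    _ = Q * (U * U) * Q := by rw [hQQ]; simp only [Matrix.mul_one, Matrix.mul_assoc]

end Matrix

theorem dotProduct_self_pos {n : Type*} [Fintype n] {R : Type*} [Ring R] [LinearOrder R]
    [IsStrictOrderedRing R] {v : n → R} (hv : v ≠ 0) : 0 < v ⬝ᵥ v :=
  (Finset.sum_nonneg fun i _ => mul_self_nonneg (v i)).lt_of_ne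
    (Ne.symm (dotProduct_self_eq_zero.not.mpr hv))

namespace Matrix.IsHermitian

variable {n : Type*} [Fintype n] [DecidableEq n] {C : Matrix n n ℝ} (hC : C.IsHermitian)

theorem dotProduct_eigenvectorBasis (i j : n) :
    ⇑(hC.eigenvectorBasis i) ⬝ᵥ ⇑(hC.eigenvectorBasis j) = if i = j then 1 else 0 := by
  rw [← orthonormal_iff_ite.mp hC.eigenvectorBasis.orthonormal i j,
    EuclideanSpace.inner_eq_star_dotProduct, dotProduct_comm]
  rfl

theorem sub_one_eq_sum_eigenvalues_smul_vecMulVec :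
    C - 1 = ∑ i, (hC.eigenvalues i - 1) •
      vecMulVec ⇑(hC.eigenvectorBasis i) ⇑(hC.eigenvectorBasis i) := by
  have hV : (hC.eigenvectorUnitary : Matrix n n ℝ) * star (hC.eigenvectorUnitary : Matrix n n ℝ)
      = 1 := Unitary.coe_mul_star_self _
  ext r s
  have h1 : (1 : Matrix n n ℝ) r s
      = ∑ i, hC.eigenvectorBasis i r * hC.eigenvectorBasis i s := by
    rw [← hV]; simp [Matrix.mul_apply]
  conv_lhs => rw [hC.spectral_theorem]
  simp only [RCLike.ofReal_real_eq_id, CompTriple.comp_eq, Unitary.conjStarAlgAut_apply,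
    sub_apply, mul_apply, eigenvectorUnitary_apply, diagonal_apply, mul_ite, mul_zero,
    Finset.sum_ite_eq', Finset.mem_univ, ↓reduceIte, star_apply, star_trivial, h1, sum_apply,
    smul_apply, vecMulVec_apply, smul_eq_mul, sub_mul, one_mul, Finset.sum_sub_distrib,
    sub_left_inj]
  exact Finset.sum_congr rfl fun i _ => by ring

theorem exists_eigenvalue_eq_one (h1 : (C - 1).det = 0) :
    ∃ j, hC.eigenvalues j = 1 := by
  have h := C.eval_charpoly 1
  rw [hC.charpoly_eq, Polynomial.eval_prod, scalar_apply, diagonal_one, ← neg_sub, det_neg, h1,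
    mul_zero, Finset.prod_eq_zero_iff] at h
  obtain ⟨j, -, hj⟩ := h
  simp only [Real.ringHom_apply, eval_sub, eval_X, eval_C] at hj
  exact ⟨j, by linarith⟩

end Matrix.IsHermitian

theorem Matrix.PosSemidef.exists_orthonormal_sub_one_eq {C : Matrix (Fin 3) (Fin 3) ℝ} (hC : C.PosSemidef)
    (h1 : (C - 1).det = 0) :
    ∃ (x y : Fin 3 → ℝ) (α β : ℝ), x ⬝ᵥ x = 1 ∧ y ⬝ᵥ y = 1 ∧ x ⬝ᵥ y = 0 ∧ 0 ≤ α ∧ 0 ≤ β ∧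
      C.det = α * β ∧ C.trace = α + β + 1 ∧
      C - 1 = (α - 1) • vecMulVec x x + (β - 1) • vecMulVec y y := by
  obtain ⟨j, hj⟩ := hC.1.exists_eigenvalue_eq_one h1
  have hne : j.succAbove 0 ≠ j.succAbove 1 := Fin.succAbove_right_injective.ne (by decide)
  refine ⟨hC.1.eigenvectorBasis (j.succAbove 0), hC.1.eigenvectorBasis (j.succAbove 1),
    hC.1.eigenvalues (j.succAbove 0), hC.1.eigenvalues (j.succAbove 1),
    ?_, ?_, ?_, hC.eigenvalues_nonneg _, hC.eigenvalues_nonneg _, ?_, ?_,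
    hC.1.sub_one_eq_sum_eigenvalues_smul_vecMulVec.trans ?_⟩
  · simp [hC.1.dotProduct_eigenvectorBasis]
  · simp [hC.1.dotProduct_eigenvectorBasis]
  · simp [hC.1.dotProduct_eigenvectorBasis, hne]
  · simp [hC.1.det_eq_prod_eigenvalues, Fin.prod_univ_succAbove _ j, hj]
  · simp only [hC.1.trace_eq_sum_eigenvalues, Real.ringHom_apply, Fin.sum_univ_succAbove _ j, hj,
      Fin.sum_univ_two]
    ring
  · simp [Fin.sum_univ_succAbove _ j, hj]

theorem cof_eq_transpose_adjugate (M : Matrix (Fin 3) (Fin 3) ℝ) : cof M = (adjugate M)ᵀ := by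
  ext i j
  simp [cof, adjugate_fin_succ_eq_det_submatrix]

theorem cof_transpose (A : Matrix (Fin 3) (Fin 3) ℝ) : cof Aᵀ = (cof A)ᵀ := by
  simp [cof_eq_transpose_adjugate, adjugate_transpose]

theorem det_add_smul_vecMulVec {R : Type*} [CommRing R] (X : Matrix (Fin 3) (Fin 3) R)
    (a v : Fin 3 → R) (x : R) :
    (X + x • vecMulVec a v).det = (1 - x) * X.det + x * (X + vecMulVec a v).det := by
  simp only [det_fin_three, Matrix.add_apply, Matrix.smul_apply, vecMulVec_apply, smul_eq_mul]
  ring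

theorem det_add_smul_symm_add_sq_smul (A : Matrix (Fin 3) (Fin 3) ℝ) (u v : Fin 3 → ℝ)
    (s x : ℝ) :
    (A + x • (vecMulVec u v + vecMulVec v u) + (x ^ 2 * s) • vecMulVec v v).det
      = (1 - x ^ 2) * A.det
        + x ^ 2 * (A + (vecMulVec u v + vecMulVec v u) + s • vecMulVec v v).det
        + (x - x ^ 2) * (v ⬝ᵥ cof A *ᵥ u + u ⬝ᵥ cof A *ᵥ v) := by
  simp only [cof_eq_transpose_adjugate, adjugate_fin_three, det_fin_three, Matrix.add_apply,
    Matrix.smul_apply, vecMulVec_apply, smul_eq_mul, dotProduct, mulVec, Fin.sum_univ_three,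
    transpose_apply, of_apply, cons_val', cons_val_zero, cons_val_one, cons_val_two, empty_val',
    cons_val_fin_one, head_cons, head_fin_const, tail_cons]
  ring

theorem exists_SO3_mul_eq_of_transpose_mul_self_eq {G M : Matrix (Fin 3) (Fin 3) ℝ}
    (hM : M.det ≠ 0) (hGM : Gᵀ * G = Mᵀ * M) (hdet : G.det = M.det) :
    ∃ R, SO3 R ∧ R * M = G := by
  have hMu : IsUnit M.det := hM.isUnit
  refine ⟨G * M⁻¹, ⟨mul_eq_one_comm.mp ?_, ?_⟩, nonsing_inv_mul_cancel_right _ _ hMu⟩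
  · rw [transpose_mul, transpose_nonsing_inv, Matrix.mul_assoc, ← Matrix.mul_assoc Gᵀ, hGM,
      Matrix.mul_assoc, mul_nonsing_inv _ hMu, Matrix.mul_one,
      nonsing_inv_mul _ (by rwa [det_transpose])]
  · rw [det_mul, det_nonsing_inv, Ring.inverse_eq_inv', hdet, mul_inv_cancel₀ hM]

section Twins

variable {n : Type*} [Fintype n]

/-- For orthonormal `x, y` and `0 ≤ p < 1 < q`, the Ball–James solutions `b ⊗ m` (one for each
`κ = ±1`) of `(I + b ⊗ m)ᵀ (I + b ⊗ m) = I + (p² - 1) x ⊗ x + (q² - 1) y ⊗ y`. -/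
noncomputable def twinAmplitude (x y : n → ℝ) (p q κ : ℝ) : n → ℝ :=
  (q * √(1 - p ^ 2)) • x + (κ * p * √(q ^ 2 - 1)) • y

noncomputable def twinNormal (x y : n → ℝ) (p q κ : ℝ) : n → ℝ :=
  (q + p)⁻¹ • (-√(1 - p ^ 2) • x + (κ * √(q ^ 2 - 1)) • y)

variable {x y : n → ℝ} {p q κ : ℝ}

theorem twinNormal_dotProduct_twinAmplitude (hx : x ⬝ᵥ x = 1) (hy : y ⬝ᵥ y = 1)
    (hxy : x ⬝ᵥ y = 0) (hp0 : 0 ≤ p) (hp1 : p ≤ 1) (hq : 1 ≤ q) (hκ : κ ^ 2 = 1) :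
    twinNormal x y p q κ ⬝ᵥ twinAmplitude x y p q κ = p * q - 1 := by
  have hs : √(1 - p ^ 2) ^ 2 = 1 - p ^ 2 := Real.sq_sqrt (by nlinarith)
  have ht : √(q ^ 2 - 1) ^ 2 = q ^ 2 - 1 := Real.sq_sqrt (by nlinarith)
  have hc : (q + p)⁻¹ * (q + p) = 1 := inv_mul_cancel₀ (by linarith)
  have hyx : y ⬝ᵥ x = 0 := by rw [dotProduct_comm, hxy]
  simp only [twinNormal, twinAmplitude, dotProduct_add, add_dotProduct, smul_dotProduct,
    dotProduct_smul, smul_eq_mul, hx, hy, hxy, hyx]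
  linear_combination (-(q + p)⁻¹ * q) * hs + ((q + p)⁻¹ * p * √(q ^ 2 - 1) ^ 2) * hκ
    + ((q + p)⁻¹ * p) * ht + (p * q - 1) * hc

theorem twinAmplitude_dotProduct_self (hx : x ⬝ᵥ x = 1) (hy : y ⬝ᵥ y = 1)
    (hxy : x ⬝ᵥ y = 0) (hp0 : 0 ≤ p) (hp1 : p ≤ 1) (hq : 1 ≤ q) (hκ : κ ^ 2 = 1) :
    twinAmplitude x y p q κ ⬝ᵥ twinAmplitude x y p q κ = q ^ 2 - p ^ 2 := by
  have hs : √(1 - p ^ 2) ^ 2 = 1 - p ^ 2 := Real.sq_sqrt (by nlinarith)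
  have ht : √(q ^ 2 - 1) ^ 2 = q ^ 2 - 1 := Real.sq_sqrt (by nlinarith)
  have hyx : y ⬝ᵥ x = 0 := by rw [dotProduct_comm, hxy]
  simp only [twinAmplitude, dotProduct_add, add_dotProduct, smul_dotProduct,
    dotProduct_smul, smul_eq_mul, hx, hy, hxy, hyx]
  linear_combination q ^ 2 * hs + (p ^ 2 * √(q ^ 2 - 1) ^ 2) * hκ + p ^ 2 * ht

theorem twin_vecMulVec_ne (hx : x ⬝ᵥ x = 1) (hy : y ⬝ᵥ y = 1) (hxy : x ⬝ᵥ y = 0)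
    (hp0 : 0 ≤ p) (hp1 : p < 1) (hq : 1 < q) :
    vecMulVec (twinAmplitude x y p q 1) (twinNormal x y p q 1)
      ≠ vecMulVec (twinAmplitude x y p q (-1)) (twinNormal x y p q (-1)) := by
  intro h
  have hxy' := congrArg (fun A => x ⬝ᵥ A *ᵥ y) h
  simp only [dotProduct_vecMulVec_mulVec, twinAmplitude, twinNormal, dotProduct_add,
    add_dotProduct, smul_dotProduct, dotProduct_smul, smul_eq_mul, hx, hy, hxy] at hxy'
  have hs : 0 < √(1 - p ^ 2) := Real.sqrt_pos.mpr (by nlinarith)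
  have ht : 0 < √(q ^ 2 - 1) := Real.sqrt_pos.mpr (by nlinarith)
  have hc : 0 < (q + p)⁻¹ := inv_pos.mpr (by linarith)
  nlinarith [mul_pos (mul_pos (mul_pos (by linarith : (0:ℝ) < q) hs) hc) ht]

variable [DecidableEq n]

theorem twin_transpose_mul_self (hx : x ⬝ᵥ x = 1) (hy : y ⬝ᵥ y = 1)
    (hxy : x ⬝ᵥ y = 0) (hp0 : 0 ≤ p) (hp1 : p ≤ 1) (hq : 1 ≤ q) (hκ : κ ^ 2 = 1) :
    (1 + vecMulVec (twinAmplitude x y p q κ) (twinNormal x y p q κ))ᵀ *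
        (1 + vecMulVec (twinAmplitude x y p q κ) (twinNormal x y p q κ))
      = 1 + ((p ^ 2 - 1) • vecMulVec x x + (q ^ 2 - 1) • vecMulVec y y) := by
  rw [transpose_mul_self_one_add_vecMulVec,
    twinAmplitude_dotProduct_self hx hy hxy hp0 hp1 hq hκ]
  congr 1
  unfold twinAmplitude twinNormal
  set s := √(1 - p ^ 2)
  set t := √(q ^ 2 - 1)
  set c := (q + p)⁻¹
  have hs : s ^ 2 = 1 - p ^ 2 := Real.sq_sqrt (by nlinarith)
  have ht : t ^ 2 = q ^ 2 - 1 := Real.sq_sqrt (by nlinarith)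
  have hc : c * (q + p) = 1 := inv_mul_cancel₀ (by linarith)
  -- the coefficients of `x ⊗ x`, `y ⊗ y` and `x ⊗ y + y ⊗ x` on the left
  have hxx : 2 * (q * s) * (c * -s) + (q ^ 2 - p ^ 2) * (c * -s) ^ 2 = p ^ 2 - 1 := by
    linear_combination ((q - p) * c * s ^ 2 - s ^ 2) * hc - hs
  have hyy : 2 * (κ * p * t) * (c * (κ * t)) + (q ^ 2 - p ^ 2) * (c * (κ * t)) ^ 2
      = q ^ 2 - 1 := by
    linear_combination t ^ 2 * hκ + ht + κ ^ 2 * t ^ 2 * (1 + c * (q - p)) * hc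
  have hxy' : q * s * (c * (κ * t)) + κ * p * t * (c * -s)
      + (q ^ 2 - p ^ 2) * (c * -s) * (c * (κ * t)) = 0 := by
    linear_combination (-c * κ * s * t * (q - p)) * hc
  ext i j
  simp only [Matrix.add_apply, Matrix.smul_apply, vecMulVec_apply, Pi.add_apply, Pi.smul_apply,
    smul_eq_mul]
  linear_combination (x i * x j) * hxx + (y i * y j) * hyy + (x i * y j + y i * x j) * hxy'

end Twins

def HasTwoRankOneSolutions (M : Matrix (Fin 3) (Fin 3) ℝ) : Prop :=
  ∃ (R1 R2 : Matrix (Fin 3) (Fin 3) ℝ) (b1 m1 b2 m2 : Fin 3 → ℝ),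
    SO3 R1 ∧ SO3 R2 ∧ R1 * M = 1 + vecMulVec b1 m1 ∧ R2 * M = 1 + vecMulVec b2 m2 ∧
      (R1, vecMulVec b1 m1) ≠ (R2, vecMulVec b2 m2)

theorem hasTwoRankOneSolutions_of_eigenvalues_lt_one_lt {M : Matrix (Fin 3) (Fin 3) ℝ}
    {x y : Fin 3 → ℝ} {α β : ℝ} (hx : x ⬝ᵥ x = 1) (hy : y ⬝ᵥ y = 1) (hxy : x ⬝ᵥ y = 0)
    (hα : 0 ≤ α) (hα1 : α < 1) (hβ : 1 < β) (hM : 0 < M.det) (hdet : M.det ^ 2 = α * β)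
    (hC : Mᵀ * M - 1 = (α - 1) • vecMulVec x x + (β - 1) • vecMulVec y y) :
    HasTwoRankOneSolutions M := by
  set p := √α
  set q := √β
  have hp : p ^ 2 = α := Real.sq_sqrt hα
  have hq : q ^ 2 = β := Real.sq_sqrt (by linarith)
  have hp1 : p < 1 := by rw [show (1 : ℝ) = √1 by simp]; exact Real.sqrt_lt_sqrt hα hα1
  have hq1 : 1 < q := by rw [show (1 : ℝ) = √1 by simp]; exact Real.sqrt_lt_sqrt zero_le_one hβ
  have hpq : p * q = M.det := by
    rw [← Real.sqrt_mul hα, ← hdet, Real.sqrt_sq hM.le]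
  have hsol : ∀ κ : ℝ, κ ^ 2 = 1 → ∃ R, SO3 R ∧
      R * M = 1 + vecMulVec (twinAmplitude x y p q κ) (twinNormal x y p q κ) := by
    intro κ hκ
    refine exists_SO3_mul_eq_of_transpose_mul_self_eq hM.ne' ?_ ?_
    · rw [twin_transpose_mul_self hx hy hxy (Real.sqrt_nonneg _) hp1.le hq1.le hκ, hp, hq,
        ← hC, add_sub_cancel]
    · rw [det_one_add_vecMulVec,
        twinNormal_dotProduct_twinAmplitude hx hy hxy (Real.sqrt_nonneg _) hp1.le hq1.le hκ,
        hpq, add_sub_cancel]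
  obtain ⟨R1, hR1, hR1M⟩ := hsol 1 (by norm_num)
  obtain ⟨R2, hR2, hR2M⟩ := hsol (-1) (by norm_num)
  exact ⟨R1, R2, _, _, _, _, hR1, hR2, hR1M, hR2M, fun h =>
    twin_vecMulVec_ne hx hy hxy (Real.sqrt_nonneg _) hp1 hq1 (congrArg Prod.snd h)⟩

theorem hasTwoRankOneSolutions_of_det_sub_one_eq_zero {M : Matrix (Fin 3) (Fin 3) ℝ}
    (hM : 0 < M.det) (h1 : (Mᵀ * M - 1).det = 0) (htr : (Mᵀ * M).det + 2 < (Mᵀ * M).trace) :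
    HasTwoRankOneSolutions M := by
  have hC : (Mᵀ * M).PosSemidef := by
    simpa using posSemidef_conjTranspose_mul_self M
  obtain ⟨x, y, α, β, hx, hy, hxy, hα, hβ, hdet, htr', hdec⟩ :=
    hC.exists_orthonormal_sub_one_eq h1
  have hdetM : M.det ^ 2 = α * β := by
    rw [← hdet, det_mul, det_transpose, sq]
  -- `tr - det - 2 = -(α - 1) (β - 1)` for the eigenvalues `α, 1, β`
  have hneg : (α - 1) * (β - 1) < 0 := by nlinarith
  rcases lt_or_gt_of_ne (show α ≠ 1 by rintro rfl; simp at hneg) with hα1 | hα1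
  · exact hasTwoRankOneSolutions_of_eigenvalues_lt_one_lt hx hy hxy hα hα1
      (by nlinarith) hM hdetM hdec
  · rw [add_comm] at hdec
    exact hasTwoRankOneSolutions_of_eigenvalues_lt_one_lt hy hx
      (by rw [dotProduct_comm, hxy]) hβ (by nlinarith) hα1 hM (by rw [hdetM, mul_comm]) hdec

theorem IsMiddleEigenvalue.det_sub_scalar_eq_zero {U : Matrix (Fin 3) (Fin 3) ℝ} {μ : ℝ}
    (h : IsMiddleEigenvalue U μ) : (scalar (Fin 3) μ - U).det = 0 := by
  obtain ⟨l1, l3, -, -, hU⟩ := h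
  rw [← eval_charpoly, hU]
  simp

theorem CC1.det_mul_self_sub_one_eq_zero {U : Matrix (Fin 3) (Fin 3) ℝ} (h : CC1 U) :
    (U * U - 1).det = 0 := by
  have h1 : (1 - U).det = 0 := by simpa using IsMiddleEigenvalue.det_sub_scalar_eq_zero h
  have h2 : (U - 1).det = 0 := by rw [← neg_sub, det_neg, h1, mul_zero]
  rw [show U * U - 1 = (U + 1) * (U - 1) by noncomm_ring, det_mul, h2, mul_zero]

theorem reflMat_transpose (e : Fin 3 → ℝ) : (reflMat e)ᵀ = reflMat e := by
  simp [reflMat, transpose_vecMulVec]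

theorem reflMat_mul_self {e : Fin 3 → ℝ} (he : e ⬝ᵥ e = 1) : reflMat e * reflMat e = 1 := by
  simp only [reflMat, add_mul, mul_add, Matrix.smul_mul, Matrix.mul_smul, vecMulVec_mul_vecMulVec,
    he, one_smul, neg_mul, mul_neg, Matrix.one_mul, Matrix.mul_one]
  module

theorem CC2.dotProduct_cof_mulVec_add_eq_zero {U : Matrix (Fin 3) (Fin 3) ℝ} {a v : Fin 3 → ℝ}
    (hU : Uᵀ = U) (h : CC2 U a v) :
    v ⬝ᵥ cof (U * U - 1) *ᵥ (U *ᵥ a) + (U *ᵥ a) ⬝ᵥ cof (U * U - 1) *ᵥ v = 0 := by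
  have hA : (U * U - 1)ᵀ = U * U - 1 := by
    rw [transpose_sub, transpose_mul, hU, transpose_one]
  have h' : (U *ᵥ a) ⬝ᵥ cof (U * U - 1) *ᵥ v = 0 := by
    rw [CC2, ← mulVec_mulVec, dotProduct_mulVec, ← mulVec_transpose, hU] at h
    exact h
  rw [dotProduct_mulVec, ← mulVec_transpose, ← cof_transpose, hA, dotProduct_comm, h', add_zero]

theorem det_transpose_mul_self_add_smul_sub_one_eq_zero {U : Matrix (Fin 3) (Fin 3) ℝ}
    {a v : Fin 3 → ℝ} (hU : Uᵀ = U) (h0 : (U * U - 1).det = 0) (h2 : CC2 U a v)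
    (h1 : ((U + vecMulVec a v)ᵀ * (U + vecMulVec a v) - 1).det = 0) (x : ℝ) :
    ((U + x • vecMulVec a v)ᵀ * (U + x • vecMulVec a v) - 1).det = 0 := by
  have hexp : ∀ x : ℝ, (U + x • vecMulVec a v)ᵀ * (U + x • vecMulVec a v) - 1
      = (U * U - 1) + x • (vecMulVec (U *ᵥ a) v + vecMulVec v (U *ᵥ a))
        + (x ^ 2 * (a ⬝ᵥ a)) • vecMulVec v v := by
    intro x
    rw [transpose_mul_self_add_smul_vecMulVec, hU]
    abel
  have h1' := hexp 1
  rw [one_smul, one_smul, one_pow, one_mul] at h1'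
  rw [hexp, det_add_smul_symm_add_sq_smul, h0, ← h1', h1, h2.dotProduct_cof_mulVec_add_eq_zero hU]
  ring

theorem stmt_2 (U Uhat Rhat : Matrix (Fin 3) (Fin 3) ℝ) (ehat a n : Fin 3 → ℝ)
    (hU : U.PosDef) (hehat : ehat ⬝ᵥ ehat = 1)
    (hUhat : Uhat = reflMat ehat * U * reflMat ehat)
    (hRhat : SO3 Rhat) (ha : a ≠ 0) (hn : n ≠ 0)
    (hcomp : Rhat * Uhat = U + Matrix.vecMulVec a n)
    (hcc : CC1 U ∧ CC2 U a n ∧ CC3 U a n) :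
    ∀ f ∈ Set.Icc (0 : ℝ) 1, f ≠ 1/2 →
      ∃ (R1 R2 : Matrix (Fin 3) (Fin 3) ℝ) (b1 m1 b2 m2 : Fin 3 → ℝ),
        SO3 R1 ∧ SO3 R2 ∧
        R1 * (f • (U + Matrix.vecMulVec a n) + (1 - f) • U)
          = 1 + Matrix.vecMulVec b1 m1 ∧
        R2 * (f • (U + Matrix.vecMulVec a n) + (1 - f) • U)
          = 1 + Matrix.vecMulVec b2 m2 ∧
        (R1, Matrix.vecMulVec b1 m1) ≠ (R2, Matrix.vecMulVec b2 m2) := by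
  obtain ⟨hCC1, hCC2, hCC3⟩ := hcc
  intro f _ hf
  have hUs : Uᵀ = U := (by simpa using hU.1 : U.IsSymm).eq
  have hQ := reflMat_mul_self hehat
  have hUU1 := hCC1.det_mul_self_sub_one_eq_zero
  have hC1 : (U + vecMulVec a n)ᵀ * (U + vecMulVec a n)
      = reflMat ehat * (U * U) * reflMat ehat := by
    rw [← hcomp, hUhat, transpose_mul_self_mul_conj hRhat.1 (reflMat_transpose ehat) hQ hUs]
  have hdet : (U + f • vecMulVec a n).det = U.det := by
    rw [det_add_smul_vecMulVec, ← hcomp, hUhat, det_mul, hRhat.2,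
      det_conj_eq_of_mul_self_eq_one hQ]
    ring
  rw [show f • (U + vecMulVec a n) + (1 - f) • U = U + f • vecMulVec a n by module]
  refine hasTwoRankOneSolutions_of_det_sub_one_eq_zero (hdet ▸ hU.det_pos) ?_ ?_
  · refine det_transpose_mul_self_add_smul_sub_one_eq_zero hUs hUU1 hCC2 ?_ f
    rw [hC1]
    rwa [← det_conj_eq_of_mul_self_eq_one hQ, Matrix.mul_sub, Matrix.sub_mul, Matrix.mul_one,
      hQ] at hUU1
  · rw [det_mul, det_transpose, hdet, trace_transpose_mul_self_add_smul_vecMulVec, hC1,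
      trace_conj_eq_of_mul_self_eq_one hQ, hUs]
    have hS := mul_pos (dotProduct_self_pos ha) (dotProduct_self_pos hn)
    have hUU : (U * U).det = U.det * U.det := det_mul U U
    unfold CC3 at hCC3
    nlinarith [mul_pos hS (sq_pos_of_ne_zero (sub_ne_zero.mpr hf))]
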